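/- arXiv:1311.4478 — 3 statements merged into one kernel-verified Lean document; each statement's English description precedes it below -/
import Mathlib

section
/- Let K be an ultrametric field and λ ∈ K with |λ| = 1. Let f(z) = λz + ... be a power series in O_K[[z]] with zero constant term and linear coefficient λ. If r ≥ 1 is an integer such that |λ^r − 1| = 1, then f has no periodic point of period r in m_K other than z = 0; that is, for every z₀ ∈ m_K \ {0} we have f^r(z₀) ≠ z₀. -/
/-!
Write `g = f^r = ∑ cₙ zⁿ`. Then `c₀ = 0`, `c₁ = λ^r` and all `|cₙ| ≤ 1`, so by the ultrametric
inequality `|g(z₀) - λ^r z₀| ≤ |z₀|²`. A fixed point `g(z₀) = z₀` would give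
`|z₀| = |λ^r - 1| |z₀| ≤ |z₀|² < |z₀|`, impossible for `z₀ ≠ 0`.
-/

open PowerSeries

/-- Formal composition `f ∘ g` of power series (correct when `g` has zero constant term). -/
noncomputable def fcomp {K : Type*} [CommRing K] (f g : PowerSeries K) : PowerSeries K :=
  PowerSeries.mk fun n =>
    ∑ m ∈ Finset.range (n + 1), (PowerSeries.coeff m f) * (PowerSeries.coeff n (g ^ m))

/-- `m`-th iterate of a power series with zero constant term. -/
noncomputable def fit {K : Type*} [CommRing K] (g : PowerSeries K) : ℕ → PowerSeries K
  | 0 => PowerSeries.X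
  | n + 1 => fcomp g (fit g n)

section CoeffBound

variable {K : Type*} [NormedCommRing K] [IsUltrametricDist K]

theorem norm_coeff_mul_le_one {a b : PowerSeries K} (ha : ∀ n, ‖coeff n a‖ ≤ 1)
    (hb : ∀ n, ‖coeff n b‖ ≤ 1) (n : ℕ) : ‖coeff n (a * b)‖ ≤ 1 := by
  rw [coeff_mul]
  refine IsUltrametricDist.norm_sum_le_of_forall_le_of_nonneg zero_le_one fun p _ => ?_
  exact (norm_mul_le _ _).trans (mul_le_one₀ (ha _) (norm_nonneg _) (hb _))

variable [NormOneClass K]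

theorem norm_coeff_pow_le_one {a : PowerSeries K} (ha : ∀ n, ‖coeff n a‖ ≤ 1) (m n : ℕ) :
    ‖coeff n (a ^ m)‖ ≤ 1 := by
  induction m generalizing n with
  | zero => rw [pow_zero, coeff_one]; split <;> simp
  | succ m ih => rw [pow_succ]; exact norm_coeff_mul_le_one ih ha n

theorem norm_coeff_fcomp_le_one {f g : PowerSeries K} (hf : ∀ n, ‖coeff n f‖ ≤ 1)
    (hg : ∀ n, ‖coeff n g‖ ≤ 1) (n : ℕ) : ‖coeff n (fcomp f g)‖ ≤ 1 := by
  rw [fcomp, coeff_mk]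
  refine IsUltrametricDist.norm_sum_le_of_forall_le_of_nonneg zero_le_one fun m _ => ?_
  exact (norm_mul_le _ _).trans
    (mul_le_one₀ (hf _) (norm_nonneg _) (norm_coeff_pow_le_one hg m n))

theorem norm_coeff_fit_le_one {f : PowerSeries K} (hf : ∀ n, ‖coeff n f‖ ≤ 1) (r n : ℕ) :
    ‖coeff n (fit f r)‖ ≤ 1 := by
  induction r generalizing n with
  | zero => simp only [fit, coeff_X]; split <;> simp
  | succ r ih => exact norm_coeff_fcomp_le_one hf ih n

end CoeffBound

section LowCoeffs

variable {K : Type*} [CommRing K]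

theorem coeff_zero_fcomp (f g : PowerSeries K) : coeff 0 (fcomp f g) = coeff 0 f := by
  simp [fcomp]

theorem coeff_one_fcomp (f g : PowerSeries K) :
    coeff 1 (fcomp f g) = coeff 1 f * coeff 1 g := by
  simp [fcomp, Finset.sum_range_succ, coeff_one]

theorem coeff_zero_fit {f : PowerSeries K} (hf0 : constantCoeff f = 0) (r : ℕ) :
    coeff 0 (fit f r) = 0 := by
  cases r with
  | zero => simp [fit]
  | succ r => rw [fit, coeff_zero_fcomp, coeff_zero_eq_constantCoeff_apply, hf0]

theorem coeff_one_fit (f : PowerSeries K) (r : ℕ) : coeff 1 (fit f r) = coeff 1 f ^ r := by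
  induction r with
  | zero => simp [fit]
  | succ r ih => rw [fit, coeff_one_fcomp, ih, pow_succ, mul_comm]

end LowCoeffs

theorem HasSum.norm_sub_linear_part_le_sq {K : Type*} [NormedRing K] [IsUltrametricDist K]
    {g : PowerSeries K} (hg : ∀ n, ‖coeff n g‖ ≤ 1) {z w : K} (hz : ‖z‖ ≤ 1)
    (h : HasSum (fun n => coeff n g * z ^ n) w) :
    ‖w - (coeff 0 g + coeff 1 g * z)‖ ≤ ‖z‖ ^ 2 := by
  have htail : HasSum (fun n => coeff (n + 2) g * z ^ (n + 2))
      (w - (coeff 0 g + coeff 1 g * z)) := by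
    simpa [Finset.sum_range_succ] using (hasSum_nat_add_iff' 2).mpr h
  rw [← htail.tsum_eq]
  refine IsUltrametricDist.norm_tsum_le_of_forall_le_of_nonneg (by positivity) fun n => ?_
  calc ‖coeff (n + 2) g * z ^ (n + 2)‖ ≤ 1 * ‖z‖ ^ (n + 2) :=
        (norm_mul_le _ _).trans
          (mul_le_mul (hg _) (norm_pow_le' z (by omega)) (norm_nonneg _) zero_le_one)
    _ ≤ ‖z‖ ^ 2 := by
        rw [one_mul]; exact pow_le_pow_of_le_one (norm_nonneg _) hz (by omega)

theorem stmt2_general {K : Type*} [NontriviallyNormedField K] [IsUltrametricDist K]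
    (lam : K)
    (f : PowerSeries K) (hf : ∀ n, ‖PowerSeries.coeff n f‖ ≤ 1)
    (hf0 : PowerSeries.constantCoeff f = 0) (hf1 : PowerSeries.coeff 1 f = lam)
    (r : ℕ) (hlr : ‖lam ^ r - 1‖ = 1)
    (z₀ : K) (hz : ‖z₀‖ < 1) (hz0 : z₀ ≠ 0) :
    ¬ HasSum (fun n : ℕ => (PowerSeries.coeff n (fit f r)) * z₀ ^ n) z₀ := by
  intro h
  have hle := h.norm_sub_linear_part_le_sq (norm_coeff_fit_le_one hf r) hz.le
  rw [coeff_zero_fit hf0, coeff_one_fit, hf1, zero_add,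
    show z₀ - lam ^ r * z₀ = -((lam ^ r - 1) * z₀) by ring,
    norm_neg, norm_mul, hlr, one_mul] at hle
  exact (pow_lt_self_of_lt_one₀ (norm_pos_iff.mpr hz0) hz one_lt_two).not_ge hle

/-- Let `K` be an ultrametric field, `λ ∈ K` with `‖λ‖ = 1`, and `f(z) = λz + ⋯` a power
series in `O_K[[z]]`.  If `r ≥ 1` satisfies `‖λ^r - 1‖ = 1`, then `f` has no periodic point
of period `r` in `m_K ∖ {0}`: for `z₀ ∈ m_K`, `z₀ ≠ 0`, the evaluation of `f^r` at `z₀`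
does not converge to `z₀`. -/
theorem stmt2 {K : Type*} [NontriviallyNormedField K] [IsUltrametricDist K]
    (lam : K) (hlam : ‖lam‖ = 1)
    (f : PowerSeries K) (hf : ∀ n, ‖PowerSeries.coeff n f‖ ≤ 1)
    (hf0 : PowerSeries.constantCoeff f = 0) (hf1 : PowerSeries.coeff 1 f = lam)
    (r : ℕ) (hr : 1 ≤ r) (hlr : ‖lam ^ r - 1‖ = 1)
    (z₀ : K) (hz : ‖z₀‖ < 1) (hz0 : z₀ ≠ 0) :
    ¬ HasSum (fun n : ℕ => (PowerSeries.coeff n (fit f r)) * z₀ ^ n) z₀ :=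
  stmt2_general lam f hf hf0 hf1 r hlr z₀ hz hz0
end

section
/- Let K be an ultrametric field of positive residue characteristic p, let λ ∈ K with |λ| = 1, and suppose the reduction of λ has finite order q in the multiplicative group of the residue field. Then p does not divide q, and for every power series f(z) = λz + ... in O_K[[z]], the minimal period of every periodic point of f in m_K \ {0} is of the form q·p^n for some integer n ≥ 0. -/
/-!
On the closed ball of radius `ρ = ‖z₀‖ < 1` the map `φ` given by `f` satisfies
`‖φ x - φ y - λ (x - y)‖ ≤ ρ ‖x - y‖`, and so does `φ^[k]` with slope `λ ^ k`. Comparing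
`φ^[ℓ] z₀ = z₀` with `φ^[ℓ] 0 = 0` gives `‖λ ^ ℓ - 1‖ < 1`, hence `q ∣ ℓ`. Write `ℓ = q p^n r` with
`p ∤ r`. Then `ψ = φ^[q p^n]` is the identity up to a factor `c < 1`, so it moves every point of
the orbit of `z₀` by nearly the same `δ = ψ z₀ - z₀`, and `r` steps move `z₀` by nearly `r δ`,
which is as large as `δ` because `‖r‖ = 1`. Periodicity forces `δ = 0`, and minimality `r = 1`.
That `p ∤ q` is injectivity of Frobenius on the residue field.
-/

open PowerSeries

open Filter Topology Function Metric

section Formal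

variable {R : Type*} [CommRing R]

lemma coeff_pow_eq_zero_of_lt {g : R⟦X⟧} (hg : constantCoeff g = 0) {m n : ℕ} (h : n < m) :
    coeff n (g ^ m) = 0 :=
  X_pow_dvd_iff.mp (pow_dvd_pow_of_dvd (X_dvd_iff.mpr hg) m) n h

lemma constantCoeff_fcomp {f : R⟦X⟧} (hf : constantCoeff f = 0) (g : R⟦X⟧) :
    constantCoeff (fcomp f g) = 0 := by
  rw [← coeff_zero_eq_constantCoeff_apply, fcomp, coeff_mk, Finset.sum_range_one,
    coeff_zero_eq_constantCoeff_apply, hf, zero_mul]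

lemma constantCoeff_fit {f : R⟦X⟧} (hf : constantCoeff f = 0) :
    ∀ m, constantCoeff (fit f m) = 0
  | 0 => constantCoeff_X
  | _ + 1 => constantCoeff_fcomp hf _

end Formal

section IntegralCoeffs

variable {R : Type*} [NormedCommRing R]

def IntegralCoeffs (f : R⟦X⟧) : Prop := ∀ n, ‖coeff n f‖ ≤ 1

lemma integralCoeffs_one [NormOneClass R] : IntegralCoeffs (1 : R⟦X⟧) := fun n => by
  rw [coeff_one]; split_ifs <;> simp

lemma integralCoeffs_X [NormOneClass R] : IntegralCoeffs (X : R⟦X⟧) := fun n => by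
  rw [coeff_X]; split_ifs <;> simp

variable [IsUltrametricDist R]

lemma IntegralCoeffs.mul {f g : R⟦X⟧} (hf : IntegralCoeffs f) (hg : IntegralCoeffs g) :
    IntegralCoeffs (f * g) := fun n => by
  rw [coeff_mul]
  refine IsUltrametricDist.norm_sum_le_of_forall_le_of_nonneg zero_le_one fun _ _ => ?_
  exact (norm_mul_le _ _).trans (mul_le_one₀ (hf _) (norm_nonneg _) (hg _))

variable [NormOneClass R]

lemma IntegralCoeffs.pow {f : R⟦X⟧} (hf : IntegralCoeffs f) : ∀ m, IntegralCoeffs (f ^ m)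
  | 0 => by simpa using integralCoeffs_one
  | m + 1 => by rw [pow_succ]; exact (hf.pow m).mul hf

lemma IntegralCoeffs.fcomp {f g : R⟦X⟧} (hf : IntegralCoeffs f) (hg : IntegralCoeffs g) :
    IntegralCoeffs (fcomp f g) := fun n => by
  rw [_root_.fcomp, coeff_mk]
  refine IsUltrametricDist.norm_sum_le_of_forall_le_of_nonneg zero_le_one fun m _ => ?_
  exact (norm_mul_le _ _).trans (mul_le_one₀ (hf m) (norm_nonneg _) (hg.pow m n))

lemma IntegralCoeffs.fit {f : R⟦X⟧} (hf : IntegralCoeffs f) : ∀ m, IntegralCoeffs (fit f m)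
  | 0 => integralCoeffs_X
  | m + 1 => hf.fcomp (hf.fit m)

end IntegralCoeffs

lemma tendsto_max_cofinite_atTop : Tendsto (fun x : ℕ × ℕ => max x.1 x.2) cofinite atTop := by
  rw [← coprod_cofinite, Nat.cofinite_eq_atTop, Filter.coprod, tendsto_sup]
  exact ⟨tendsto_atTop_mono (fun _ => le_max_left _ _) tendsto_comap,
    tendsto_atTop_mono (fun _ => le_max_right _ _) tendsto_comap⟩

section Evaluation

variable {K : Type*} [NormedField K]

/-- Meaningful for `‖z‖ < 1` and integral `f`; where the series diverges, `tsum` returns `0`. -/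
noncomputable def tsumEval (f : K⟦X⟧) (z : K) : K := ∑' n, coeff n f * z ^ n

lemma IntegralCoeffs.norm_coeff_mul_pow_le {f : K⟦X⟧} (hf : IntegralCoeffs f) (z : K) (n : ℕ) :
    ‖coeff n f * z ^ n‖ ≤ ‖z‖ ^ n := by
  rw [norm_mul, norm_pow]
  exact mul_le_of_le_one_left (by positivity) (hf n)

lemma norm_pow_le_one_of_norm_le_one {u : K} (hu : ‖u‖ ≤ 1) (n : ℕ) : ‖u ^ n‖ ≤ 1 := by
  rw [norm_pow]
  exact pow_le_one₀ (norm_nonneg u) hu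

lemma tsumEval_zero_right (f : K⟦X⟧) : tsumEval f 0 = constantCoeff f := by
  rw [tsumEval, tsum_eq_single 0 fun n hn => by rw [zero_pow hn, mul_zero]]
  simp

lemma tsumEval_one (z : K) : tsumEval 1 z = 1 := by
  rw [tsumEval, tsum_eq_single 0 fun n hn => by rw [coeff_one, if_neg hn, zero_mul]]
  simp

lemma tsumEval_X (z : K) : tsumEval X z = z := by
  rw [tsumEval, tsum_eq_single 1 fun n hn => by rw [coeff_X, if_neg hn, zero_mul]]
  simp

variable [IsUltrametricDist K] [CompleteSpace K]

lemma summable_of_norm_le_pow_max {z : K} (hz : ‖z‖ < 1) {g : ℕ × ℕ → K}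
    (hg : ∀ x, ‖g x‖ ≤ ‖z‖ ^ max x.1 x.2) : Summable g :=
  NonarchimedeanAddGroup.summable_of_tendsto_cofinite_zero <| squeeze_zero_norm hg <|
    (tendsto_pow_atTop_nhds_zero_of_lt_one (norm_nonneg z) hz).comp tendsto_max_cofinite_atTop

lemma hasSum_tsumEval {f : K⟦X⟧} (hf : IntegralCoeffs f) {z : K} (hz : ‖z‖ < 1) :
    HasSum (fun n => coeff n f * z ^ n) (tsumEval f z) := by
  refine (NonarchimedeanAddGroup.summable_of_tendsto_cofinite_zero ?_).hasSum
  rw [Nat.cofinite_eq_atTop]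
  exact squeeze_zero_norm (hf.norm_coeff_mul_pow_le z)
    (tendsto_pow_atTop_nhds_zero_of_lt_one (norm_nonneg z) hz)

lemma tsumEval_mul {f g : K⟦X⟧} (hf : IntegralCoeffs f) (hg : IntegralCoeffs g) {z : K}
    (hz : ‖z‖ < 1) : tsumEval (f * g) z = tsumEval f z * tsumEval g z := by
  have hprod : Summable fun x : ℕ × ℕ => (coeff x.1 f * z ^ x.1) * (coeff x.2 g * z ^ x.2) :=
    summable_of_norm_le_pow_max hz fun x => by
      rw [norm_mul]
      calc _ ≤ ‖z‖ ^ x.1 * ‖z‖ ^ x.2 :=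
            mul_le_mul (hf.norm_coeff_mul_pow_le z _) (hg.norm_coeff_mul_pow_le z _)
              (norm_nonneg _) (by positivity)
        _ = ‖z‖ ^ (x.1 + x.2) := (pow_add _ _ _).symm
        _ ≤ ‖z‖ ^ max x.1 x.2 :=
            pow_le_pow_of_le_one (norm_nonneg z) hz.le (max_le le_self_add le_add_self)
  rw [tsumEval, tsumEval, tsumEval, (hasSum_tsumEval hf hz).summable
    |>.tsum_mul_tsum_eq_tsum_sum_antidiagonal (hasSum_tsumEval hg hz).summable hprod]
  refine tsum_congr fun n => ?_
  rw [coeff_mul, Finset.sum_mul]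
  refine Finset.sum_congr rfl fun x hx => ?_
  rw [← Finset.HasAntidiagonal.mem_antidiagonal.mp hx, pow_add]
  ring

lemma tsumEval_pow {f : K⟦X⟧} (hf : IntegralCoeffs f) {z : K} (hz : ‖z‖ < 1) :
    ∀ m, tsumEval (f ^ m) z = tsumEval f z ^ m
  | 0 => by rw [pow_zero, pow_zero, tsumEval_one]
  | m + 1 => by rw [pow_succ, pow_succ, tsumEval_mul (hf.pow m) hf hz, tsumEval_pow hf hz m]

lemma tsumEval_fcomp {f g : K⟦X⟧} (hf : IntegralCoeffs f) (hg : IntegralCoeffs g)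
    (hg0 : constantCoeff g = 0) {z : K} (hz : ‖z‖ < 1) :
    tsumEval (fcomp f g) z = tsumEval f (tsumEval g z) := by
  set c : ℕ → ℕ → K := fun m n => coeff m f * (coeff n (g ^ m) * z ^ n)
  have hc : Summable (uncurry c) := summable_of_norm_le_pow_max hz fun ⟨m, n⟩ => by
    rcases lt_or_ge n m with h | h
    · simp [c, uncurry, coeff_pow_eq_zero_of_lt hg0 h]
    · rw [max_eq_right h, uncurry, norm_mul]
      exact (mul_le_of_le_one_left (norm_nonneg _) (hf m)).trans
        ((hg.pow m).norm_coeff_mul_pow_le z n)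
  have hinner : ∀ n, ∑' m, c m n = coeff n (fcomp f g) * z ^ n := fun n => by
    rw [tsum_eq_sum (s := Finset.range (n + 1)) fun m hm => by
      simp [c, coeff_pow_eq_zero_of_lt hg0 (by simpa using hm : n < m)]]
    rw [fcomp, coeff_mk, Finset.sum_mul]
    exact Finset.sum_congr rfl fun m _ => by ring
  calc tsumEval (fcomp f g) z = ∑' n, ∑' m, c m n := tsum_congr fun n => (hinner n).symm
    _ = ∑' m, ∑' n, c m n := hc.tsum_comm
    _ = tsumEval f (tsumEval g z) := tsum_congr fun m => by
      rw [tsum_mul_left, ← tsumEval, tsumEval_pow hg hz]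

lemma tsumEval_fit {f : K⟦X⟧} (hf : IntegralCoeffs f) (hf0 : constantCoeff f = 0)
    {z : K} (hz : ‖z‖ < 1) : ∀ m, tsumEval (fit f m) z = (tsumEval f)^[m] z
  | 0 => tsumEval_X z
  | m + 1 => by
    rw [fit, tsumEval_fcomp hf (hf.fit m) (constantCoeff_fit hf0 m) hz, tsumEval_fit hf hf0 hz m,
      iterate_succ_apply']

end Evaluation

section ApproxLinear

variable {K : Type*} [NormedField K] [IsUltrametricDist K]

structure ApproxLinearOn (φ : K → K) (a : K) (c : ℝ) (s : Set K) : Prop where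
  mapsTo : Set.MapsTo φ s s
  norm_sub_sub_le : ∀ x ∈ s, ∀ y ∈ s, ‖φ x - φ y - a * (x - y)‖ ≤ c * ‖x - y‖

namespace ApproxLinearOn

variable {φ ψ : K → K} {a b : K} {c : ℝ} {s : Set K}

lemma norm_sub_le (h : ApproxLinearOn φ a c s) (ha : ‖a‖ ≤ 1) (hc : c ≤ 1) {x y : K}
    (hx : x ∈ s) (hy : y ∈ s) : ‖φ x - φ y‖ ≤ ‖x - y‖ := by
  rw [← sub_add_cancel (φ x - φ y) (a * (x - y))]
  refine (IsUltrametricDist.norm_add_le_max _ _).trans (max_le ?_ ?_)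
  · exact (h.norm_sub_sub_le x hx y hy).trans (mul_le_of_le_one_left (norm_nonneg _) hc)
  · rw [norm_mul]
    exact mul_le_of_le_one_left (norm_nonneg _) ha

lemma comp (hφ : ApproxLinearOn φ a c s) (hψ : ApproxLinearOn ψ b c s) (ha : ‖a‖ ≤ 1)
    (hb : ‖b‖ ≤ 1) (hc₀ : 0 ≤ c) (hc₁ : c ≤ 1) : ApproxLinearOn (φ ∘ ψ) (a * b) c s where
  mapsTo := hφ.mapsTo.comp hψ.mapsTo
  norm_sub_sub_le x hx y hy := by
    have hsplit : φ (ψ x) - φ (ψ y) - a * b * (x - y) =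
        (φ (ψ x) - φ (ψ y) - a * (ψ x - ψ y)) + a * (ψ x - ψ y - b * (x - y)) := by ring
    rw [comp_apply, comp_apply, hsplit]
    refine (IsUltrametricDist.norm_add_le_max _ _).trans (max_le ?_ ?_)
    · exact (hφ.norm_sub_sub_le _ (hψ.mapsTo hx) _ (hψ.mapsTo hy)).trans
        (mul_le_mul_of_nonneg_left (hψ.norm_sub_le hb hc₁ hx hy) hc₀)
    · rw [norm_mul]
      exact (mul_le_of_le_one_left (norm_nonneg _) ha).trans (hψ.norm_sub_sub_le x hx y hy)

lemma iterate (h : ApproxLinearOn φ a c s) (ha : ‖a‖ ≤ 1) (hc₀ : 0 ≤ c) (hc₁ : c ≤ 1) :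
    ∀ n, ApproxLinearOn φ^[n] (a ^ n) c s
  | 0 => ⟨Set.mapsTo_id s, fun x _ y _ => by simpa using mul_nonneg hc₀ (norm_nonneg (x - y))⟩
  | n + 1 => by
    rw [iterate_succ', pow_succ']
    exact h.comp (h.iterate ha hc₀ hc₁ n) ha (norm_pow_le_one_of_norm_le_one ha n) hc₀ hc₁

lemma change_slope (h : ApproxLinearOn φ a c s) (b : K) :
    ApproxLinearOn φ b (max c ‖a - b‖) s where
  mapsTo := h.mapsTo
  norm_sub_sub_le x hx y hy := by
    have hsplit : φ x - φ y - b * (x - y) = (φ x - φ y - a * (x - y)) + (a - b) * (x - y) := by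
      ring
    rw [hsplit]
    refine (IsUltrametricDist.norm_add_le_max _ _).trans (max_le ?_ ?_)
    · exact (h.norm_sub_sub_le x hx y hy).trans
        (mul_le_mul_of_nonneg_right (le_max_left _ _) (norm_nonneg _))
    · rw [norm_mul]
      exact mul_le_mul_of_nonneg_right (le_max_right _ _) (norm_nonneg _)

lemma norm_pow_sub_one_le (h : ApproxLinearOn φ a c s) (ha : ‖a‖ ≤ 1) (hc₀ : 0 ≤ c)
    (hc₁ : c ≤ 1) (h0 : 0 ∈ s) (hφ0 : φ 0 = 0) {x : K} (hx : x ∈ s) (hx0 : x ≠ 0) {n : ℕ}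
    (hper : IsPeriodicPt φ n x) : ‖a ^ n - 1‖ ≤ c := by
  have key := (h.iterate ha hc₀ hc₁ n).norm_sub_sub_le x hx 0 h0
  rw [hper.eq, iterate_fixed hφ0, sub_zero, show x - a ^ n * x = (1 - a ^ n) * x by ring,
    norm_mul, norm_sub_rev] at key
  exact le_of_mul_le_mul_right key (norm_pos_iff.mpr hx0)

theorem isFixedPt_of_isPeriodicPt (h : ApproxLinearOn φ 1 c s) (hc₀ : 0 ≤ c) (hc₁ : c < 1)
    {x : K} (hx : x ∈ s) {r : ℕ} (hr : ‖(r : K)‖ = 1) (hper : IsPeriodicPt φ r x) :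
    IsFixedPt φ x := by
  set δ := φ x - x
  have hstep : ∀ j, ‖φ^[j + 1] x - φ^[j] x - δ‖ ≤ c * ‖δ‖ := fun j => by
    simpa [iterate_succ_apply] using
      (h.iterate norm_one.le hc₀ hc₁.le j).norm_sub_sub_le _ (h.mapsTo hx) x hx
  have hsum : ∑ j ∈ Finset.range r, (φ^[j + 1] x - φ^[j] x - δ) = -(r * δ) := by
    rw [Finset.sum_sub_distrib, Finset.sum_range_sub (φ^[·] x), hper.eq, iterate_zero_apply,
      sub_self, zero_sub, Finset.sum_const, Finset.card_range, nsmul_eq_mul]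
  have hδ : ‖δ‖ ≤ c * ‖δ‖ := by
    calc ‖δ‖ = ‖∑ j ∈ Finset.range r, (φ^[j + 1] x - φ^[j] x - δ)‖ := by
          rw [hsum, norm_neg, norm_mul, hr, one_mul]
      _ ≤ c * ‖δ‖ := IsUltrametricDist.norm_sum_le_of_forall_le_of_nonneg (by positivity)
          fun j _ => hstep j
  have : ‖δ‖ = 0 := by nlinarith [norm_nonneg δ]
  exact sub_eq_zero.mp (norm_eq_zero.mp this)

end ApproxLinearOn

end ApproxLinear

section Estimates

variable {K : Type*} [NormedField K] [IsUltrametricDist K]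

lemma norm_pow_succ_sub_pow_succ_le {x y : K} {ρ : ℝ} (hx : ‖x‖ ≤ ρ) (hy : ‖y‖ ≤ ρ) (n : ℕ) :
    ‖x ^ (n + 1) - y ^ (n + 1)‖ ≤ ρ ^ n * ‖x - y‖ := by
  have hρ : 0 ≤ ρ := (norm_nonneg x).trans hx
  rw [← geom_sum₂_mul, norm_mul]
  refine mul_le_mul_of_nonneg_right ?_ (norm_nonneg _)
  refine IsUltrametricDist.norm_sum_le_of_forall_le_of_nonneg (by positivity) fun i hi => ?_
  rw [norm_mul, norm_pow, norm_pow, add_tsub_cancel_right,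
    ← pow_mul_pow_sub ρ (Nat.le_of_lt_succ (Finset.mem_range.mp hi))]
  gcongr

variable [CompleteSpace K]

theorem approxLinearOn_tsumEval {f : K⟦X⟧} (hf : IntegralCoeffs f) (hf0 : constantCoeff f = 0)
    {ρ : ℝ} (hρ : ρ < 1) : ApproxLinearOn (tsumEval f) (coeff 1 f) ρ (closedBall 0 ρ) := by
  have key : ∀ x ∈ closedBall (0 : K) ρ, ∀ y ∈ closedBall (0 : K) ρ,
      ‖tsumEval f x - tsumEval f y - coeff 1 f * (x - y)‖ ≤ ρ * ‖x - y‖ := by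
    intro x hx y hy
    rw [mem_closedBall_zero_iff] at hx hy
    have hρ0 : 0 ≤ ρ := (norm_nonneg x).trans hx
    have hsum := ((hasSum_tsumEval hf (hx.trans_lt hρ)).sub
      (hasSum_tsumEval hf (hy.trans_lt hρ))).sub (hasSum_ite_eq 1 (coeff 1 f * (x - y)))
    rw [← hsum.tsum_eq]
    refine IsUltrametricDist.norm_tsum_le_of_forall_le_of_nonneg (by positivity) fun n => ?_
    match n with
    | 0 => simpa [hf0] using mul_nonneg hρ0 (norm_nonneg (x - y))
    | 1 => simpa [← mul_sub] using mul_nonneg hρ0 (norm_nonneg (x - y))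
    | n + 2 =>
      rw [if_neg (by omega), sub_zero, ← mul_sub, norm_mul]
      calc ‖coeff (n + 2) f‖ * ‖x ^ (n + 2) - y ^ (n + 2)‖ ≤ 1 * (ρ ^ (n + 1) * ‖x - y‖) :=
            mul_le_mul (hf _) (norm_pow_succ_sub_pow_succ_le hx hy _) (norm_nonneg _) zero_le_one
        _ ≤ ρ * ‖x - y‖ := by
            rw [one_mul]
            exact mul_le_mul_of_nonneg_right (pow_le_of_le_one hρ0 hρ.le n.succ_ne_zero)
              (norm_nonneg _)
  refine ⟨fun x hx => ?_, key⟩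
  have hx' := mem_closedBall_zero_iff.mp hx
  have h := key x hx 0 (mem_closedBall_self ((norm_nonneg x).trans hx'))
  rw [tsumEval_zero_right, hf0, sub_zero, sub_zero] at h
  rw [mem_closedBall_zero_iff, ← sub_add_cancel (tsumEval f x) (coeff 1 f * x)]
  refine (IsUltrametricDist.norm_add_le_max _ _).trans (max_le (h.trans ?_) ?_)
  · exact mul_le_of_le_one_left (norm_nonneg x) hρ.le |>.trans hx'
  · rw [norm_mul]
    exact (mul_le_of_le_one_left (norm_nonneg _) (hf 1)).trans hx'

end Estimates

section Residues

variable {K : Type*} [NormedField K] [IsUltrametricDist K]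

lemma norm_natCast_eq_one_of_coprime {m n : ℕ} (hm : ‖(m : K)‖ < 1) (h : m.Coprime n) :
    ‖(n : K)‖ = 1 := by
  obtain ⟨a, b, hab⟩ := Nat.isCoprime_iff_coprime.mpr h
  have h1 : (1 : K) = (a : K) * m + (b : K) * n := by
    exact_mod_cast congrArg (Int.cast (R := K)) hab.symm
  refine le_antisymm (IsUltrametricDist.norm_natCast_le_one K n) (not_lt.mp fun hn => ?_)
  have hlt : ‖(a : K) * m + (b : K) * n‖ < 1 := by
    refine (IsUltrametricDist.norm_add_le_max _ _).trans_lt (max_lt ?_ ?_) <;> rw [norm_mul]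
    · exact (mul_le_of_le_one_left (norm_nonneg _)
        (IsUltrametricDist.norm_intCast_le_one K a)).trans_lt hm
    · exact (mul_le_of_le_one_left (norm_nonneg _)
        (IsUltrametricDist.norm_intCast_le_one K b)).trans_lt hn
  rw [← h1, norm_one] at hlt
  exact lt_irrefl _ hlt

lemma norm_pow_sub_one_lt_one {u : K} (hu : ‖u‖ ≤ 1) (h : ‖u - 1‖ < 1) (k : ℕ) :
    ‖u ^ k - 1‖ < 1 := by
  rw [← geom_sum_mul, norm_mul]
  refine (mul_le_of_le_one_left (norm_nonneg _) ?_).trans_lt h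
  exact IsUltrametricDist.norm_sum_le_of_forall_le_of_nonneg zero_le_one fun i _ =>
    norm_pow_le_one_of_norm_le_one hu i

lemma norm_sub_one_lt_one_of_pow_prime {p : ℕ} (hp : p.Prime) (hpK : ‖(p : K)‖ < 1) {u : K}
    (hu : ‖u‖ ≤ 1) (h : ‖u ^ p - 1‖ < 1) : ‖u - 1‖ < 1 := by
  have hu1 : ‖u - 1‖ ≤ 1 := by
    rw [sub_eq_add_neg]
    exact (IsUltrametricDist.norm_add_le_max _ _).trans (max_le hu (by rw [norm_neg, norm_one]))
  have hbinom := add_pow_prime_eq' hp (u - 1) 1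
  set S := ∑ k ∈ Finset.Ioo 0 p, (u - 1) ^ k * 1 ^ (p - k) * ((p.choose k / p : ℕ) : K)
  have hS : ‖S‖ ≤ 1 :=
    IsUltrametricDist.norm_sum_le_of_forall_le_of_nonneg zero_le_one fun k _ => by
      rw [one_pow, mul_one, norm_mul]
      exact mul_le_one₀ (norm_pow_le_one_of_norm_le_one hu1 k) (norm_nonneg _)
        (IsUltrametricDist.norm_natCast_le_one K _)
  have hpow : (u - 1) ^ p = (u ^ p - 1) + -(p * S) := by
    rw [sub_add_cancel, one_pow] at hbinom
    rw [hbinom]; ring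
  have hlt : ‖u - 1‖ ^ p < 1 := by
    rw [← norm_pow, hpow]
    refine (IsUltrametricDist.norm_add_le_max _ _).trans_lt (max_lt h ?_)
    rw [norm_neg, norm_mul]
    exact (mul_le_of_le_one_right (norm_nonneg _) hS).trans_lt hpK
  exact (pow_lt_one_iff_of_nonneg (norm_nonneg _) hp.ne_zero).mp hlt

variable {lam : K} {q : ℕ}

lemma dvd_of_norm_pow_sub_one_lt_one (hlam : ‖lam‖ ≤ 1) (hq0 : 0 < q) (hq1 : ‖lam ^ q - 1‖ < 1)
    (hq2 : ∀ j, 0 < j → j < q → ¬ ‖lam ^ j - 1‖ < 1) {j : ℕ} (hj : ‖lam ^ j - 1‖ < 1) : q ∣ j := by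
  refine Nat.dvd_of_mod_eq_zero <| Nat.eq_zero_of_not_pos fun hpos =>
    hq2 _ hpos (Nat.mod_lt j hq0) ?_
  have hj' : lam ^ j = (lam ^ q) ^ (j / q) * lam ^ (j % q) := by
    rw [← pow_mul, ← pow_add, Nat.div_add_mod]
  have hsplit : lam ^ (j % q) - 1 =
      (lam ^ j - 1) + -(lam ^ (j % q) * ((lam ^ q) ^ (j / q) - 1)) := by
    rw [hj']; ring
  rw [hsplit]
  refine (IsUltrametricDist.norm_add_le_max _ _).trans_lt (max_lt hj ?_)
  rw [norm_neg, norm_mul]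
  exact (mul_le_of_le_one_left (norm_nonneg _) (norm_pow_le_one_of_norm_le_one hlam _)).trans_lt
    (norm_pow_sub_one_lt_one (norm_pow_le_one_of_norm_le_one hlam q) hq1 _)

lemma not_dvd_of_norm_pow_sub_one_lt_one {p : ℕ} (hp : p.Prime) (hpK : ‖(p : K)‖ < 1)
    (hlam : ‖lam‖ ≤ 1) (hq0 : 0 < q) (hq1 : ‖lam ^ q - 1‖ < 1)
    (hq2 : ∀ j, 0 < j → j < q → ¬ ‖lam ^ j - 1‖ < 1) : ¬ p ∣ q := by
  rintro ⟨s, rfl⟩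
  have hs : 0 < s := Nat.pos_of_mul_pos_left hq0
  refine hq2 s hs (lt_mul_left hs hp.one_lt) <|
    norm_sub_one_lt_one_of_pow_prime hp hpK (norm_pow_le_one_of_norm_le_one hlam s) ?_
  rwa [← pow_mul, mul_comm]

end Residues

lemma Function.IsPeriodicPt.minimalPeriod_eq {α : Type*} {f : α → α} {x : α} {n : ℕ} (hn : 0 < n)
    (hx : IsPeriodicPt f n x) (hmin : ∀ m, 0 < m → m < n → ¬ IsPeriodicPt f m x) :
    minimalPeriod f x = n :=
  le_antisymm (hx.minimalPeriod_le hn) <| not_lt.mp fun hlt =>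
    hmin _ (hx.minimalPeriod_pos hn) hlt (isPeriodicPt_minimalPeriod f x)

theorem ApproxLinearOn.exists_minimalPeriod_eq_mul_pow {K : Type*} [NormedField K]
    [IsUltrametricDist K] {p q : ℕ} (hp : p.Prime) (hpK : ‖(p : K)‖ < 1) {lam : K}
    (hlam : ‖lam‖ ≤ 1) (hq0 : 0 < q) (hq1 : ‖lam ^ q - 1‖ < 1)
    (hq2 : ∀ j, 0 < j → j < q → ¬ ‖lam ^ j - 1‖ < 1) {φ : K → K} {c : ℝ} {s : Set K}
    (h : ApproxLinearOn φ lam c s) (hc₀ : 0 ≤ c) (hc₁ : c < 1) (h0 : 0 ∈ s) (hφ0 : φ 0 = 0)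
    {x : K} (hx : x ∈ s) (hx0 : x ≠ 0) (hper : x ∈ periodicPts φ) :
    ∃ n, minimalPeriod φ x = q * p ^ n := by
  obtain ⟨m, hm⟩ : q ∣ minimalPeriod φ x :=
    dvd_of_norm_pow_sub_one_lt_one hlam hq0 hq1 hq2 <| (h.norm_pow_sub_one_le hlam hc₀ hc₁.le h0
      hφ0 hx hx0 (isPeriodicPt_minimalPeriod φ x)).trans_lt hc₁
  have hm0 : m ≠ 0 := by
    rintro rfl
    exact (minimalPeriod_pos_of_mem_periodicPts hper).ne' (by rw [hm, mul_zero])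
  obtain ⟨n, r, hpr, rfl⟩ := Nat.exists_eq_pow_mul_and_not_dvd hm0 p hp.ne_one
  have hk : ‖lam ^ (q * p ^ n) - 1‖ < 1 := by
    rw [pow_mul]
    exact norm_pow_sub_one_lt_one (norm_pow_le_one_of_norm_le_one hlam q) hq1 _
  have hfix : IsPeriodicPt φ (q * p ^ n) x :=
    ((h.iterate hlam hc₀ hc₁.le _).change_slope 1).isFixedPt_of_isPeriodicPt
      (le_max_of_le_left hc₀) (max_lt hc₁ hk) hx
      (norm_natCast_eq_one_of_coprime hpK ((hp.coprime_iff_not_dvd).mpr hpr)) <| by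
        rw [IsPeriodicPt, ← iterate_mul, mul_assoc, ← hm]
        exact isPeriodicPt_minimalPeriod φ x
  exact ⟨n, Nat.dvd_antisymm hfix.minimalPeriod_dvd ⟨r, by rw [hm, mul_assoc]⟩⟩

/-- Let `K` be an ultrametric field of residue characteristic `p > 0` (i.e. `‖(p : K)‖ < 1`
for the prime `p`), `λ ∈ K` with `‖λ‖ = 1` whose reduction has finite order `q` in the
residue field (expressed as: `‖λ^q - 1‖ < 1` and `‖λ^j - 1‖ ≥ 1` for `0 < j < q`).
Then `p ∤ q`, and for every `f(z) = λz + ⋯` in `O_K[[z]]`, the minimal period of every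
periodic point of `f` in `m_K ∖ {0}` is of the form `q·p^n`. -/
theorem stmt3 {K : Type*} [NontriviallyNormedField K] [IsUltrametricDist K] [CompleteSpace K]
    (p : ℕ) (hp : p.Prime) (hpK : ‖(p : K)‖ < 1)
    (lam : K) (hlam : ‖lam‖ = 1)
    (q : ℕ) (hq0 : 0 < q) (hq1 : ‖lam ^ q - 1‖ < 1)
    (hq2 : ∀ j, 0 < j → j < q → ¬ ‖lam ^ j - 1‖ < 1) :
    ¬ p ∣ q ∧
    ∀ (f : PowerSeries K), (∀ n, ‖PowerSeries.coeff n f‖ ≤ 1) →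
      PowerSeries.constantCoeff f = 0 → PowerSeries.coeff 1 f = lam →
      ∀ z₀ : K, ‖z₀‖ < 1 → z₀ ≠ 0 →
        ∀ ℓ : ℕ, 0 < ℓ →
          HasSum (fun n : ℕ => (PowerSeries.coeff n (fit f ℓ)) * z₀ ^ n) z₀ →
          (∀ m, 0 < m → m < ℓ →
            ¬ HasSum (fun n : ℕ => (PowerSeries.coeff n (fit f m)) * z₀ ^ n) z₀) →
          ∃ n : ℕ, ℓ = q * p ^ n := by
  refine ⟨not_dvd_of_norm_pow_sub_one_lt_one hp hpK hlam.le hq0 hq1 hq2, ?_⟩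
  intro f (hf : IntegralCoeffs f) hf0 hf1 z₀ hz₀ hz₀0 ℓ hℓ hsum hmin
  have hfit (m : ℕ) : HasSum (fun n => coeff n (fit f m) * z₀ ^ n) ((tsumEval f)^[m] z₀) :=
    tsumEval_fit hf hf0 hz₀ m ▸ hasSum_tsumEval (hf.fit m) hz₀
  have hperiod : minimalPeriod (tsumEval f) z₀ = ℓ :=
    IsPeriodicPt.minimalPeriod_eq hℓ ((hfit ℓ).unique hsum) fun m hm0 hmℓ hm =>
      hmin m hm0 hmℓ (by simpa only [hm.eq] using hfit m)
  have hlin := approxLinearOn_tsumEval hf hf0 hz₀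
  rw [hf1] at hlin
  obtain ⟨n, hn⟩ := hlin.exists_minimalPeriod_eq_mul_pow hp hpK hlam.le hq0 hq1 hq2
    (norm_nonneg z₀) hz₀ (mem_closedBall_self (norm_nonneg z₀))
    (by rw [tsumEval_zero_right, hf0]) (mem_closedBall_zero_iff.mpr le_rfl) hz₀0
    (minimalPeriod_pos_iff_mem_periodicPts.mp (hperiod ▸ hℓ))
  exact ⟨n, hperiod ▸ hn⟩
end

section
/- Let K be an ultrametric field of residue characteristic p > 0, λ ∈ K with |λ| = 1 such that the reduction of λ has finite order q in the residue field, and suppose λ^q ≠ 1. Let f(z) = λz + ... be a power series in O_K[[z]]. Then every periodic point w₀ ∈ m_K \ {0} of f of minimal period q satisfies |w₀| ≥ |λ^q − 1|^{1/q}. -/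
open PowerSeries

/-!
Let `g = f^{∘q} - X`. Since `f` maps the disc `‖z‖ ≤ ‖w₀‖` into itself, the orbit of `w₀`
consists of `q` distinct nonzero zeros of `g` of absolute value at most `‖w₀‖`, and `0` is a
zero as well. Dividing a power series over `O_K` by `X - z` at a zero `z` in the disc leaves
a power series over `O_K` (ultrametric inequality), so `g = X ⬝ ∏ (X - z) ⬝ h` with `h` integral,
and comparing linear coefficients gives `‖λ^q - 1‖ = ‖g'(0)‖ ≤ ∏ ‖z‖ ≤ ‖w₀‖^q`.
-/

open Function Finset

theorem Function.minimalPeriod_eq_of_forall_lt {α : Type*} {F : α → α} {x : α} {q : ℕ}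
    (hq : 0 < q) (hx : IsPeriodicPt F q x) (hmin : ∀ m, 0 < m → m < q → ¬IsPeriodicPt F m x) :
    minimalPeriod F x = q :=
  (hx.minimalPeriod_le hq).antisymm <| not_lt.mp fun hlt =>
    hmin _ (hx.minimalPeriod_pos hq) hlt (isPeriodicPt_minimalPeriod F x)

theorem Function.IsPeriodicPt.eq_of_iterate_eq {α : Type*} {F : α → α} {x y : α} {q j : ℕ}
    (hx : IsPeriodicPt F q x) (hy : IsFixedPt F y) (hj : j ≤ q) (h : F^[j] x = y) : x = y := by
  rw [← hx.eq, ← Nat.sub_add_cancel hj, iterate_add_apply, h]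
  exact hy.iterate _

namespace PowerSeries

section Integral

variable (K : Type*) [NormedField K] [IsUltrametricDist K]

def integralSubring : Subring K⟦X⟧ where
  carrier := {g | ∀ n, ‖coeff n g‖ ≤ 1}
  mul_mem' {a b} ha hb n := by
    rw [coeff_mul]
    refine IsUltrametricDist.norm_sum_le_of_forall_le_of_nonneg zero_le_one fun kl _ => ?_
    rw [norm_mul]
    exact mul_le_one₀ (ha kl.1) (norm_nonneg _) (hb kl.2)
  one_mem' n := by
    rw [coeff_one]
    split <;> simp
  add_mem' {a b} ha hb n := by
    rw [map_add]
    exact (IsUltrametricDist.norm_add_le_max _ _).trans (max_le (ha n) (hb n))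
  zero_mem' n := by simp
  neg_mem' {a} ha n := by simpa using ha n

variable {K}

theorem X_mem_integralSubring : (X : K⟦X⟧) ∈ integralSubring K := fun n => by
  rw [coeff_X]
  split <;> simp

theorem C_mem_integralSubring {w : K} (hw : ‖w‖ ≤ 1) : C w ∈ integralSubring K := fun n => by
  rw [coeff_C]
  split <;> simp [hw]

theorem fcomp_mem_integralSubring {f g : K⟦X⟧} (hf : f ∈ integralSubring K)
    (hg : g ∈ integralSubring K) : fcomp f g ∈ integralSubring K := fun n => by
  rw [fcomp, coeff_mk]
  refine IsUltrametricDist.norm_sum_le_of_forall_le_of_nonneg zero_le_one fun m _ => ?_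
  rw [norm_mul]
  exact mul_le_one₀ (hf m) (norm_nonneg _) (pow_mem hg m n)

theorem fit_mem_integralSubring {f : K⟦X⟧} (hf : f ∈ integralSubring K) :
    ∀ n, fit f n ∈ integralSubring K
  | 0 => X_mem_integralSubring
  | n + 1 => fcomp_mem_integralSubring hf (fit_mem_integralSubring hf n)

end Integral

section Composition

variable {R : Type*} [CommRing R]

theorem coeff_pow_eq_zero_of_lt {g : R⟦X⟧} (h0 : constantCoeff g = 0) {m n : ℕ} (h : n < m) :
    coeff n (g ^ m) = 0 :=
  X_pow_dvd_iff.mp (pow_dvd_pow_of_dvd (X_dvd_iff.mpr h0) m) n h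

theorem constantCoeff_fcomp {f : R⟦X⟧} (hf0 : constantCoeff f = 0) (g : R⟦X⟧) :
    constantCoeff (fcomp f g) = 0 := by
  rw [← coeff_zero_eq_constantCoeff_apply, fcomp, coeff_mk]
  simp [coeff_zero_eq_constantCoeff_apply, hf0]

theorem constantCoeff_fit {f : R⟦X⟧} (hf0 : constantCoeff f = 0) :
    ∀ n, constantCoeff (fit f n) = 0
  | 0 => constantCoeff_X
  | n + 1 => constantCoeff_fcomp hf0 (fit f n)

theorem coeff_one_fcomp {f : R⟦X⟧} (hf0 : constantCoeff f = 0) (g : R⟦X⟧) :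
    coeff 1 (fcomp f g) = coeff 1 f * coeff 1 g := by
  rw [fcomp, coeff_mk, Finset.sum_range_succ, Finset.sum_range_one, pow_one, pow_zero]
  simp [coeff_one, coeff_zero_eq_constantCoeff_apply, hf0]

theorem coeff_one_fit {f : R⟦X⟧} (hf0 : constantCoeff f = 0) :
    ∀ n, coeff 1 (fit f n) = coeff 1 f ^ n
  | 0 => by rw [pow_zero]; exact coeff_one_X
  | n + 1 => by rw [fit, coeff_one_fcomp hf0, coeff_one_fit hf0 n, pow_succ, mul_comm]

end Composition

section Evaluation

variable {K : Type*} [NormedField K]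

/-- Junk value `0` where the series diverges. -/
noncomputable def eval (g : K⟦X⟧) (w : K) : K := ∑' n, coeff n g * w ^ n

theorem eval_zero_right (g : K⟦X⟧) : eval g 0 = constantCoeff g := by
  rw [eval, tsum_eq_single 0 fun n hn => by simp [zero_pow hn]]
  simp

theorem eval_C (c w : K) : eval (C c) w = c := by
  rw [eval, tsum_eq_single 0 fun n hn => by simp [coeff_C, hn]]
  simp

theorem eval_X (w : K) : eval (X : K⟦X⟧) w = w := by
  rw [eval, tsum_eq_single 1 fun n hn => by simp [coeff_X, hn]]
  simp

theorem eval_sub {a b : K⟦X⟧} {w : K} (ha : Summable fun n => coeff n a * w ^ n)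
    (hb : Summable fun n => coeff n b * w ^ n) : eval (a - b) w = eval a w - eval b w := by
  simp only [eval, map_sub, sub_mul]
  exact ha.tsum_sub hb

variable [IsUltrametricDist K]

theorem norm_coeff_mul_pow_le {g : K⟦X⟧} (hg : g ∈ integralSubring K) (w : K) (m n : ℕ) :
    ‖coeff m g * w ^ n‖ ≤ ‖w‖ ^ n := by
  rw [norm_mul, norm_pow]
  exact mul_le_of_le_one_left (pow_nonneg (norm_nonneg w) n) (hg m)

theorem summable_norm_coeff_mul_pow {g : K⟦X⟧} (hg : g ∈ integralSubring K) {w : K}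
    (hw : ‖w‖ < 1) : Summable fun n => ‖coeff n g * w ^ n‖ :=
  (summable_geometric_of_lt_one (norm_nonneg w) hw).of_nonneg_of_le (fun _ => norm_nonneg _)
    fun n => norm_coeff_mul_pow_le hg w n n

theorem norm_eval_le_one {g : K⟦X⟧} (hg : g ∈ integralSubring K) {w : K} (hw : ‖w‖ ≤ 1) :
    ‖eval g w‖ ≤ 1 :=
  IsUltrametricDist.norm_tsum_le_of_forall_le_of_nonneg zero_le_one fun n =>
    (norm_coeff_mul_pow_le hg w n n).trans (pow_le_one₀ (norm_nonneg w) hw)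

theorem norm_eval_le {g : K⟦X⟧} (hg : g ∈ integralSubring K) (h0 : constantCoeff g = 0) {w : K}
    (hw : ‖w‖ ≤ 1) : ‖eval g w‖ ≤ ‖w‖ :=
  IsUltrametricDist.norm_tsum_le_of_forall_le_of_nonneg (norm_nonneg w) fun
    | 0 => by simp [h0]
    | n + 1 => (norm_coeff_mul_pow_le hg w _ _).trans
        (pow_le_of_le_one (norm_nonneg w) hw n.succ_ne_zero)

theorem norm_iterate_eval_le {f : K⟦X⟧} (hf : f ∈ integralSubring K) (hf0 : constantCoeff f = 0)
    {w : K} (hw : ‖w‖ ≤ 1) (n : ℕ) : ‖(eval f)^[n] w‖ ≤ ‖w‖ := by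
  induction n with
  | zero => rfl
  | succ n ih =>
    rw [iterate_succ_apply']
    exact (norm_eval_le hf hf0 (ih.trans hw)).trans ih

variable [CompleteSpace K]

theorem summable_coeff_mul_pow {g : K⟦X⟧} (hg : g ∈ integralSubring K) {w : K} (hw : ‖w‖ < 1) :
    Summable fun n => coeff n g * w ^ n :=
  (summable_norm_coeff_mul_pow hg hw).of_norm

theorem eval_mul {a b : K⟦X⟧} (ha : a ∈ integralSubring K) (hb : b ∈ integralSubring K) {w : K}
    (hw : ‖w‖ < 1) : eval (a * b) w = eval a w * eval b w := by
  rw [eval, eval, eval, tsum_mul_tsum_eq_tsum_sum_antidiagonal_of_summable_norm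
    (summable_norm_coeff_mul_pow ha hw) (summable_norm_coeff_mul_pow hb hw)]
  refine tsum_congr fun n => ?_
  rw [coeff_mul, Finset.sum_mul]
  refine Finset.sum_congr rfl fun kl hkl => ?_
  rw [mul_mul_mul_comm, ← pow_add, mem_antidiagonal.mp hkl]

theorem eval_pow {a : K⟦X⟧} (ha : a ∈ integralSubring K) {w : K} (hw : ‖w‖ < 1) (m : ℕ) :
    eval (a ^ m) w = eval a w ^ m := by
  induction m with
  | zero => simpa using eval_C 1 w
  | succ m ih => rw [pow_succ, pow_succ, eval_mul (pow_mem ha m) ha hw, ih]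

theorem eval_fcomp {f g : K⟦X⟧} (hf : f ∈ integralSubring K) (hg : g ∈ integralSubring K)
    (h0 : constantCoeff g = 0) {w : K} (hw : ‖w‖ < 1) : eval (fcomp f g) w = eval f (eval g w) := by
  set F : ℕ → ℕ → K := fun m n => coeff m f * coeff n (g ^ m) * w ^ n with hF
  -- `F m n` vanishes for `n < m`, so `‖F m n‖ ≤ ‖w‖ ^ n ≤ s ^ m * s ^ n` with `s = √‖w‖`.
  have hsummable : Summable (uncurry F) := by
    set s := √‖w‖
    have hs0 : 0 ≤ s := Real.sqrt_nonneg _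
    have hs1 : s < 1 := by simpa using Real.sqrt_lt_sqrt (norm_nonneg w) hw
    have hgeo : Summable fun n : ℕ => s ^ n := summable_geometric_of_lt_one hs0 hs1
    refine Summable.of_norm_bounded (hgeo.mul_of_nonneg hgeo (fun n => pow_nonneg hs0 n)
      (fun n => pow_nonneg hs0 n)) fun ⟨m, n⟩ => ?_
    rcases lt_or_ge n m with hnm | hmn
    · simp only [uncurry_apply_pair, hF, coeff_pow_eq_zero_of_lt h0 hnm, mul_zero, zero_mul,
        norm_zero]
      positivity
    calc ‖F m n‖ ≤ ‖w‖ ^ n := by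
          simp only [hF, mul_assoc]
          rw [norm_mul]
          exact mul_le_of_le_one_left (norm_nonneg _) (hf m) |>.trans
            (norm_coeff_mul_pow_le (pow_mem hg m) w n n)
      _ = s ^ (n + n) := by rw [← Real.sq_sqrt (norm_nonneg w), ← pow_mul, two_mul]
      _ ≤ s ^ (m + n) := pow_le_pow_of_le_one hs0 hs1.le (by omega)
      _ = s ^ m * s ^ n := pow_add s m n
  have hrow (n : ℕ) : coeff n (fcomp f g) * w ^ n = ∑' m, F m n := by
    rw [fcomp, coeff_mk, Finset.sum_mul, tsum_eq_sum (s := range (n + 1)) fun m hm => by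
      simp [hF, coeff_pow_eq_zero_of_lt h0 (by simpa using hm : n < m)]]
  have hcol (m : ℕ) : ∑' n, F m n = coeff m f * eval g w ^ m := by
    rw [← eval_pow hg hw m, eval, ← tsum_mul_left]
    simp only [hF, mul_assoc]
  calc eval (fcomp f g) w = ∑' n, ∑' m, F m n := tsum_congr hrow
    _ = ∑' m, ∑' n, F m n := hsummable.tsum_comm
    _ = eval f (eval g w) := tsum_congr hcol

theorem eval_fit {f : K⟦X⟧} (hf : f ∈ integralSubring K) (hf0 : constantCoeff f = 0) (n : ℕ)
    {w : K} (hw : ‖w‖ < 1) : eval (fit f n) w = (eval f)^[n] w := by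
  induction n with
  | zero => exact eval_X w
  | succ n ih =>
    rw [fit, eval_fcomp hf (fit_mem_integralSubring hf n) (constantCoeff_fit hf0 n) hw, ih,
      iterate_succ_apply']

theorem hasSum_coeff_fit_iff {f : K⟦X⟧} (hf : f ∈ integralSubring K) (hf0 : constantCoeff f = 0)
    (n : ℕ) {w z : K} (hw : ‖w‖ < 1) :
    HasSum (fun m => coeff m (fit f n) * w ^ m) z ↔ (eval f)^[n] w = z := by
  rw [(summable_coeff_mul_pow (fit_mem_integralSubring hf n) hw).hasSum_iff,
    ← eval_fit hf hf0 n hw, eval]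

end Evaluation

section DividedDifference

variable {K : Type*} [NormedField K] [IsUltrametricDist K]

/-- The quotient `(g - g(w)) / (X - w)`. -/
noncomputable def dslope (g : K⟦X⟧) (w : K) : K⟦X⟧ :=
  mk fun j => ∑' t, coeff (j + 1 + t) g * w ^ t

theorem dslope_mem_integralSubring {g : K⟦X⟧} (hg : g ∈ integralSubring K) {w : K}
    (hw : ‖w‖ ≤ 1) : dslope g w ∈ integralSubring K := fun j => by
  rw [dslope, coeff_mk]
  exact IsUltrametricDist.norm_tsum_le_of_forall_le_of_nonneg zero_le_one fun t =>
    (norm_coeff_mul_pow_le hg w _ t).trans (pow_le_one₀ (norm_nonneg w) hw)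

variable [CompleteSpace K]

theorem tsum_coeff_succ_add_mul_pow {g : K⟦X⟧} (hg : g ∈ integralSubring K) {w : K}
    (hw : ‖w‖ < 1) (j : ℕ) :
    ∑' t, coeff (j + 1 + t) g * w ^ t =
      coeff (j + 1) g + w * ∑' t, coeff (j + 1 + 1 + t) g * w ^ t := by
  have hsummable : Summable fun t => coeff (j + 1 + t) g * w ^ t :=
    (summable_geometric_of_lt_one (norm_nonneg w) hw).of_norm_bounded fun t =>
      norm_coeff_mul_pow_le hg w _ t
  rw [hsummable.tsum_eq_zero_add, ← tsum_mul_left]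
  congr 1
  · simp
  · exact tsum_congr fun t => by rw [pow_succ, show j + 1 + (t + 1) = j + 1 + 1 + t by omega]; ring

theorem X_sub_C_mul_dslope {g : K⟦X⟧} (hg : g ∈ integralSubring K) {w : K} (hw : ‖w‖ < 1) :
    (X - C w) * dslope g w = g - C (eval g w) := by
  ext k
  rw [sub_mul, map_sub, map_sub]
  rcases k with _ | k
  · have hshift : ∑' t, coeff (t + 1) g * w ^ (t + 1) = w * ∑' t, coeff (0 + 1 + t) g * w ^ t := by
      rw [← tsum_mul_left]
      exact tsum_congr fun t => by rw [zero_add, add_comm 1 t, pow_succ]; ring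
    simp only [coeff_zero_eq_constantCoeff, map_mul, constantCoeff_X, zero_mul, constantCoeff_C,
      dslope, constantCoeff_mk, eval]
    rw [(summable_coeff_mul_pow hg hw).tsum_eq_zero_add, hshift]
    simp
  · rw [coeff_succ_X_mul, coeff_C_mul, coeff_C, if_neg k.succ_ne_zero, sub_zero, dslope, coeff_mk,
      coeff_mk, tsum_coeff_succ_add_mul_pow hg hw]
    ring

theorem eval_eq_eval_add_mul_eval_dslope {g : K⟦X⟧} (hg : g ∈ integralSubring K) {w z : K}
    (hw : ‖w‖ < 1) (hz : ‖z‖ < 1) : eval g z = eval g w + (z - w) * eval (dslope g w) z := by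
  have hXw : X - C w ∈ integralSubring K :=
    sub_mem X_mem_integralSubring (C_mem_integralSubring hw.le)
  have hmul := congrArg (eval · z) (X_sub_C_mul_dslope hg hw)
  rw [eval_mul hXw (dslope_mem_integralSubring hg hw.le) hz,
    eval_sub (summable_coeff_mul_pow X_mem_integralSubring hz)
      (summable_coeff_mul_pow (C_mem_integralSubring hw.le) hz),
    eval_sub (summable_coeff_mul_pow hg hz)
      (summable_coeff_mul_pow (C_mem_integralSubring (norm_eval_le_one hg hw.le)) hz),
    eval_X, eval_C, eval_C] at hmul
  linear_combination -hmul

end DividedDifference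

section WeierstrassBound

variable {K : Type*} [NormedField K] [IsUltrametricDist K] [CompleteSpace K]

theorem norm_eval_zero_le_prod {g : K⟦X⟧} (hg : g ∈ integralSubring K) {s : Finset K}
    (hs : ∀ z ∈ s, ‖z‖ < 1) (hroot : ∀ z ∈ s, eval g z = 0) : ‖eval g 0‖ ≤ ∏ z ∈ s, ‖z‖ := by
  classical
  induction s using Finset.induction_on generalizing g with
  | empty => simpa using norm_eval_le_one hg (by simp)
  | insert a s ha ih =>
    have ha1 : ‖a‖ < 1 := hs a (mem_insert_self a s)
    have hfactor {z : K} (hz : ‖z‖ < 1) : eval g z = (z - a) * eval (dslope g a) z := by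
      rw [eval_eq_eval_add_mul_eval_dslope hg ha1 hz, hroot a (mem_insert_self a s), zero_add]
    have hroot' : ∀ z ∈ s, eval (dslope g a) z = 0 := fun z hz => by
      have hza : z - a ≠ 0 := sub_ne_zero.mpr (ne_of_mem_of_not_mem hz ha)
      have := hfactor (hs z (mem_insert_of_mem hz))
      rw [hroot z (mem_insert_of_mem hz)] at this
      exact (mul_eq_zero.mp this.symm).resolve_left hza
    rw [prod_insert ha, hfactor (by simp), zero_sub, norm_mul, norm_neg]
    exact mul_le_mul_of_nonneg_left (ih (dslope_mem_integralSubring hg ha1.le)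
      (fun z hz => hs z (mem_insert_of_mem hz)) hroot') (norm_nonneg a)

theorem norm_coeff_one_le_prod {g : K⟦X⟧} (hg : g ∈ integralSubring K)
    (h0 : constantCoeff g = 0) {s : Finset K} (hs : ∀ z ∈ s, ‖z‖ < 1) (hs0 : (0 : K) ∉ s)
    (hroot : ∀ z ∈ s, eval g z = 0) : ‖coeff 1 g‖ ≤ ∏ z ∈ s, ‖z‖ := by
  have hcoeff : eval (dslope g 0) 0 = coeff 1 g := by
    rw [eval_zero_right, dslope, constantCoeff_mk, tsum_eq_single 0 fun t ht => by
      simp [zero_pow ht]]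
    simp
  rw [← hcoeff]
  refine norm_eval_zero_le_prod (dslope_mem_integralSubring hg (by simp)) hs fun z hz => ?_
  have := eval_eq_eval_add_mul_eval_dslope hg (w := 0) (by simp) (hs z hz)
  rw [hroot z hz, eval_zero_right, h0, zero_add, sub_zero, eq_comm] at this
  exact (mul_eq_zero.mp this).resolve_left (ne_of_mem_of_not_mem hz hs0)

end WeierstrassBound

section Dynamics

variable {K : Type*} [NormedField K] [IsUltrametricDist K] [CompleteSpace K]

theorem norm_coeff_one_fit_sub_X_le {f : K⟦X⟧} (hf : f ∈ integralSubring K)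
    (hf0 : constantCoeff f = 0) {w : K} (hw : ‖w‖ < 1) (hw0 : w ≠ 0) {q : ℕ}
    (hperiod : minimalPeriod (eval f) w = q) : ‖coeff 1 (fit f q - X)‖ ≤ ‖w‖ ^ q := by
  classical
  have hperiodic : IsPeriodicPt (eval f) q w := hperiod ▸ isPeriodicPt_minimalPeriod _ w
  set s := (range q).image ((eval f)^[·] w)
  have hs (z) (hz : z ∈ s) : ‖z‖ < 1 := by
    obtain ⟨j, -, rfl⟩ := mem_image.mp hz
    exact (norm_iterate_eval_le hf hf0 hw.le j).trans_lt hw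
  have hs0 : (0 : K) ∉ s := fun h0 => by
    obtain ⟨j, hj, hj0⟩ := mem_image.mp h0
    have hfixed : IsFixedPt (eval f) 0 := by simp [IsFixedPt, eval_zero_right, hf0]
    exact hw0 (hperiodic.eq_of_iterate_eq hfixed (mem_range.mp hj).le hj0)
  have hroot (z) (hz : z ∈ s) : eval (fit f q - X) z = 0 := by
    obtain ⟨j, -, rfl⟩ := mem_image.mp hz
    rw [eval_sub (summable_coeff_mul_pow (fit_mem_integralSubring hf q) (hs _ hz))
      (summable_coeff_mul_pow X_mem_integralSubring (hs _ hz)), eval_fit hf hf0 q (hs _ hz),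
      eval_X, (hperiodic.apply_iterate j).eq, sub_self]
  calc ‖coeff 1 (fit f q - X)‖ ≤ ∏ z ∈ s, ‖z‖ :=
        norm_coeff_one_le_prod (sub_mem (fit_mem_integralSubring hf q) X_mem_integralSubring)
          (by simp [constantCoeff_fit hf0]) hs hs0 hroot
    _ = ∏ j ∈ range q, ‖(eval f)^[j] w‖ := prod_image fun i hi j hj =>
        iterate_injOn_Iio_minimalPeriod (by simpa [hperiod] using hi) (by simpa [hperiod] using hj)
    _ ≤ ∏ _j ∈ range q, ‖w‖ :=
        prod_le_prod (fun _ _ => norm_nonneg _) fun j _ => norm_iterate_eval_le hf hf0 hw.le j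
    _ = ‖w‖ ^ q := by rw [prod_const, card_range]

end Dynamics

end PowerSeries

theorem stmt4_general {K : Type*} [NontriviallyNormedField K] [IsUltrametricDist K] [CompleteSpace K]
    (lam : K)
    (q : ℕ) (hq0 : 0 < q)
    (f : PowerSeries K) (hf : ∀ n, ‖PowerSeries.coeff n f‖ ≤ 1)
    (hf0 : PowerSeries.constantCoeff f = 0) (hf1 : PowerSeries.coeff 1 f = lam)
    (w₀ : K) (hw : ‖w₀‖ < 1) (hw0 : w₀ ≠ 0)
    (hper : HasSum (fun n : ℕ => (PowerSeries.coeff n (fit f q)) * w₀ ^ n) w₀)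
    (hmin : ∀ m, 0 < m → m < q →
      ¬ HasSum (fun n : ℕ => (PowerSeries.coeff n (fit f m)) * w₀ ^ n) w₀) :
    ‖lam ^ q - 1‖ ^ ((1 : ℝ) / (q : ℝ)) ≤ ‖w₀‖ := by
  have hfI : f ∈ integralSubring K := hf
  have hperiod : minimalPeriod f.eval w₀ = q :=
    minimalPeriod_eq_of_forall_lt hq0 ((hasSum_coeff_fit_iff hfI hf0 q hw).mp hper)
      fun m hm hmq h => hmin m hm hmq ((hasSum_coeff_fit_iff hfI hf0 m hw).mpr h)
  have hbound : ‖lam ^ q - 1‖ ≤ ‖w₀‖ ^ q := by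
    simpa [coeff_one_fit hf0, hf1] using norm_coeff_one_fit_sub_X_le hfI hf0 hw hw0 hperiod
  calc ‖lam ^ q - 1‖ ^ ((1 : ℝ) / q) ≤ (‖w₀‖ ^ q) ^ ((1 : ℝ) / q) := by gcongr
    _ = ‖w₀‖ := by rw [one_div, Real.pow_rpow_inv_natCast (norm_nonneg _) hq0.ne']

/-- Let `K` be an ultrametric field of residue characteristic `p > 0`, `λ ∈ K` with
`‖λ‖ = 1` whose reduction has order `q` in the residue field, and `λ^q ≠ 1`.  Then every
periodic point `w₀ ∈ m_K ∖ {0}` of `f(z) = λz + ⋯ ∈ O_K[[z]]` of minimal period `q`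
satisfies `‖w₀‖ ≥ ‖λ^q - 1‖^(1/q)`. -/
theorem stmt4 {K : Type*} [NontriviallyNormedField K] [IsUltrametricDist K] [CompleteSpace K]
    (p : ℕ) (hp : p.Prime) (hpK : ‖(p : K)‖ < 1)
    (lam : K) (hlam : ‖lam‖ = 1)
    (q : ℕ) (hq0 : 0 < q) (hq1 : ‖lam ^ q - 1‖ < 1)
    (hq2 : ∀ j, 0 < j → j < q → ¬ ‖lam ^ j - 1‖ < 1)
    (hqne : lam ^ q ≠ 1)
    (f : PowerSeries K) (hf : ∀ n, ‖PowerSeries.coeff n f‖ ≤ 1)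
    (hf0 : PowerSeries.constantCoeff f = 0) (hf1 : PowerSeries.coeff 1 f = lam)
    (w₀ : K) (hw : ‖w₀‖ < 1) (hw0 : w₀ ≠ 0)
    (hper : HasSum (fun n : ℕ => (PowerSeries.coeff n (fit f q)) * w₀ ^ n) w₀)
    (hmin : ∀ m, 0 < m → m < q →
      ¬ HasSum (fun n : ℕ => (PowerSeries.coeff n (fit f m)) * w₀ ^ n) w₀) :
    ‖lam ^ q - 1‖ ^ ((1 : ℝ) / (q : ℝ)) ≤ ‖w₀‖ :=
  stmt4_general lam q hq0 f hf hf0 hf1 w₀ hw hw0 hper hmin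
end
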